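/- Let L be a loop with multiplication group Mult(L) and inner mapping group Inn(L). Then the normalizer of Inn(L) in Mult(L) is the internal direct product of Inn(L) and the centre Z(Mult(L)) of Mult(L); that is, N_{Mult(L)}(Inn(L)) = Inn(L)·Z(Mult(L)) and Inn(L) ∩ Z(Mult(L)) is trivial. -/

import Mathlib

/-- A loop: a binary operation with two-sided identity such that all left and
right translations are bijections. -/
structure LoopStruct (L : Type*) where
  mul : L → L → L
  e : L
  one_mul : ∀ x, mul e x = x
  mul_one : ∀ x, mul x e = x
  left_bij : ∀ a, Function.Bijective (mul a)
  right_bij : ∀ a, Function.Bijective (fun x => mul x a)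

/-- The left translation `λ_a` as a permutation of `L`. -/
noncomputable def leftTrans {L : Type*} (S : LoopStruct L) (a : L) : Equiv.Perm L :=
  Equiv.ofBijective _ (S.left_bij a)

/-- The right translation `ρ_a` as a permutation of `L`. -/
noncomputable def rightTrans {L : Type*} (S : LoopStruct L) (a : L) : Equiv.Perm L :=
  Equiv.ofBijective _ (S.right_bij a)

/-- The multiplication group `Mult(L)`. -/
noncomputable def MultGroup {L : Type*} (S : LoopStruct L) : Subgroup (Equiv.Perm L) :=
  Subgroup.closure (Set.range (leftTrans S) ∪ Set.range (rightTrans S))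

/-- The inner mapping group `Inn(L)`: the stabilizer of `e` in `Mult(L)`. -/
noncomputable def InnGroup {L : Type*} (S : LoopStruct L) : Subgroup ↥(MultGroup S) :=
  Subgroup.comap (MultGroup S).subtype (MulAction.stabilizer (Equiv.Perm L) S.e)

/-!
`Mult(L)` acts faithfully and transitively on `L` with point stabilizer `Inn(L)`. In such an
action a central element fixing one point fixes every point, so `Inn(L) ∩ Z(Mult(L)) = 1`.
If `g` normalizes `Inn(L)`, then `Inn(L)` fixes `a = g e`; the loop identity `n a = n(e) · a`
for `n ∈ Mult(L)` (apply it to `n λ_x`) then says that `ρ_a` commutes with `Mult(L)`, and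
`g = (ρ_a⁻¹ g) ρ_a` with `ρ_a⁻¹ g ∈ Inn(L)` and `ρ_a` central.
-/

namespace MulAction

variable {G X : Type*} [Group G] [MulAction G X]

theorem stabilizer_le_stabilizer_smul_of_mem_normalizer {x : X} {g : G}
    (hg : g ∈ Subgroup.normalizer (stabilizer G x : Set G)) :
    stabilizer G x ≤ stabilizer G (g • x) := by
  intro h hh
  have hconj : g⁻¹ * h * g ∈ stabilizer G x := (Subgroup.mem_normalizer_iff''.mp hg h).mp hh
  rwa [mem_stabilizer_iff, mul_smul, mul_smul, inv_smul_eq_iff] at hconj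

theorem stabilizer_inf_center_eq_bot [FaithfulSMul G X] [IsPretransitive G X] (x : X) :
    stabilizer G x ⊓ Subgroup.center G = ⊥ := by
  refine eq_bot_iff.mpr fun z ⟨hzx, hzc⟩ =>
    Subgroup.mem_bot.mpr <| eq_of_smul_eq_smul (α := X) fun y => ?_
  obtain ⟨g, rfl⟩ := exists_smul_eq G x y
  rw [one_smul, smul_smul, ← Subgroup.mem_center_iff.mp hzc g, mul_smul,
    mem_stabilizer_iff.mp hzx]

end MulAction

namespace LoopStruct

variable {L : Type*} (S : LoopStruct L)

noncomputable def leftMult (a : L) : MultGroup S :=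
  ⟨leftTrans S a, Subgroup.subset_closure (Or.inl ⟨a, rfl⟩)⟩

noncomputable def rightMult (a : L) : MultGroup S :=
  ⟨rightTrans S a, Subgroup.subset_closure (Or.inr ⟨a, rfl⟩)⟩

@[simp]
theorem leftMult_smul (a x : L) : S.leftMult a • x = S.mul a x := rfl

@[simp]
theorem rightMult_smul (a x : L) : S.rightMult a • x = S.mul x a := rfl

theorem innGroup_eq_stabilizer : InnGroup S = MulAction.stabilizer (MultGroup S) S.e := rfl

instance isPretransitive_multGroup : MulAction.IsPretransitive (MultGroup S) L :=
  (MulAction.isPretransitive_iff_base S.e).mpr fun x => ⟨S.leftMult x, S.mul_one x⟩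

variable {S}

theorem smul_eq_mul_smul_e_of_innGroup_fixes {a : L} (ha : ∀ h ∈ InnGroup S, h • a = a)
    (n : MultGroup S) : n • a = S.mul (n • S.e) a := by
  have hinn : (S.leftMult (n • S.e))⁻¹ * n ∈ InnGroup S := by
    rw [innGroup_eq_stabilizer, MulAction.mem_stabilizer_iff, mul_smul, inv_smul_eq_iff,
      leftMult_smul, S.mul_one]
  have hfix := ha _ hinn
  rwa [mul_smul, inv_smul_eq_iff, leftMult_smul] at hfix

theorem rightMult_mem_center_of_innGroup_fixes {a : L} (ha : ∀ h ∈ InnGroup S, h • a = a) :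
    S.rightMult a ∈ Subgroup.center (MultGroup S) := by
  refine Subgroup.mem_center_iff.mpr fun m => Subtype.ext <| Equiv.ext fun x => ?_
  have hx := smul_eq_mul_smul_e_of_innGroup_fixes ha (m * S.leftMult x)
  rwa [mul_smul, mul_smul, leftMult_smul, leftMult_smul, S.mul_one] at hx

end LoopStruct

/-- Niemenmaa-Kepka: the normalizer of `Inn(L)` in `Mult(L)` is the internal direct
product of `Inn(L)` and the centre of `Mult(L)`. -/
theorem normalizer_inn_eq_inn_mul_center (L : Type) (S : LoopStruct L) :
    (∀ g : ↥(MultGroup S), g ∈ Subgroup.normalizer (InnGroup S : Set ↥(MultGroup S)) ↔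
      ∃ i ∈ InnGroup S, ∃ z ∈ Subgroup.center ↥(MultGroup S), g = i * z) ∧
    InnGroup S ⊓ Subgroup.center ↥(MultGroup S) = ⊥ := by
  refine ⟨fun g => ⟨fun hg => ?_, ?_⟩, ?_⟩
  · have hfix : ∀ h ∈ InnGroup S, h • (g • S.e) = g • S.e := fun h hh =>
      MulAction.stabilizer_le_stabilizer_smul_of_mem_normalizer hg hh
    have hcenter := LoopStruct.rightMult_mem_center_of_innGroup_fixes hfix
    refine ⟨(S.rightMult (g • S.e))⁻¹ * g, ?_, _, hcenter, ?_⟩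
    · rw [S.innGroup_eq_stabilizer, MulAction.mem_stabilizer_iff, mul_smul, inv_smul_eq_iff,
        S.rightMult_smul, S.one_mul]
    · rw [Subgroup.mem_center_iff.mp hcenter, mul_inv_cancel_left]
  · rintro ⟨i, hi, z, hz, rfl⟩
    exact mul_mem (Subgroup.le_normalizer hi) (Subgroup.center_le_normalizer _ hz)
  · rw [S.innGroup_eq_stabilizer]
    exact MulAction.stabilizer_inf_center_eq_bot S.e
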